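/- (Proposition 3) For all k ≥ 0 and m ≥ 0, the set { n : ψ^{(m)}(w_k)(n) ≠ 0 } is finite and its cardinality is a power of 2. -/

import Mathlib

/-!
Since `ψ` is Pascal's rule, `ψ^[m] (w_k)` is row `m` of Pascal's triangle mod 2, shifted by `k`.
Lucas's theorem `C(m, j) ≡ C(m % p, j % p) * C(m / p, j / p) [MOD p]` makes
`j ↦ (j % p, j / p)` a bijection from the support of row `m` mod `p` onto the product of the
supports of rows `m % p` and `m / p`. For `p = 2`, row `m % 2` has support of size `1` or `2`,
so induction on `m` gives a power of two.
-/

/-- The difference operator keeping the first term: `psi w 0 = w 0`,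
`psi w (n+1) = w n + w (n+1)` (in `F_2`, sum equals difference). -/
def psi (w : ℕ → ZMod 2) : ℕ → ZMod 2
  | 0 => w 0
  | n + 1 => w n + w (n + 1)


/-- The indicator sequence of `k`. -/
def wk (k : ℕ) : ℕ → ZMod 2 := fun n => if n = k then 1 else 0

open Finset

theorem psi_iterate_wk_of_lt {k n : ℕ} (m : ℕ) (h : n < k) : psi^[m] (wk k) n = 0 := by
  induction m generalizing n with
  | zero => simp [wk, h.ne]
  | succ m ih =>
    rw [Function.iterate_succ_apply']
    cases n with
    | zero => exact ih h
    | succ n => simp only [psi, ih h, ih (Nat.lt_of_succ_lt h), add_zero]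

theorem psi_iterate_wk_add (k m j : ℕ) : psi^[m] (wk k) (j + k) = m.choose j := by
  induction m generalizing j with
  | zero => cases j <;> simp [wk]
  | succ m ih =>
    rw [Function.iterate_succ_apply']
    cases j with
    | zero =>
      cases k with
      | zero => simpa [psi] using ih 0
      | succ k =>
        rw [zero_add, psi, psi_iterate_wk_of_lt m (Nat.lt_succ_self k), zero_add]
        simpa using ih 0
    | succ j =>
      rw [show j + 1 + k = j + k + 1 by omega, psi, ih, show j + k + 1 = j + 1 + k by omega, ih,
        Nat.choose_succ_succ', Nat.cast_add]

def pascalRowSupport (p m : ℕ) : Finset ℕ :=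
  (range (m + 1)).filter fun j => (m.choose j : ZMod p) ≠ 0

theorem mem_pascalRowSupport {p m j : ℕ} :
    j ∈ pascalRowSupport p m ↔ (m.choose j : ZMod p) ≠ 0 := by
  refine mem_filter.trans ⟨And.right, fun h => ⟨mem_range_succ_iff.2 ?_, h⟩⟩
  by_contra hj
  exact h (by rw [Nat.choose_eq_zero_of_lt (not_le.1 hj), Nat.cast_zero])

theorem le_of_mem_pascalRowSupport {p m j : ℕ} (h : j ∈ pascalRowSupport p m) : j ≤ m :=
  mem_range_succ_iff.1 (mem_filter.1 h).1

section Lucas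

variable {p : ℕ} [Fact p.Prime]

theorem cast_choose_eq_mul_mod_div (m j : ℕ) :
    (m.choose j : ZMod p) = (m % p).choose (j % p) * (m / p).choose (j / p) := by
  rw [← Nat.cast_mul, ZMod.natCast_eq_natCast_iff]
  exact Choose.choose_modEq_choose_mod_mul_choose_div_nat

theorem card_pascalRowSupport_eq_mul (m : ℕ) :
    #(pascalRowSupport p m) = #(pascalRowSupport p (m % p)) * #(pascalRowSupport p (m / p)) := by
  have hp : 0 < p := (Fact.out : p.Prime).pos
  have digits {a : ℕ} (b : ℕ) (ha : a ∈ pascalRowSupport p (m % p)) :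
      (a + p * b) % p = a ∧ (a + p * b) / p = b := by
    have ha : a < p := (le_of_mem_pascalRowSupport ha).trans_lt (Nat.mod_lt m hp)
    rw [Nat.add_mul_mod_self_left, Nat.mod_eq_of_lt ha, Nat.add_mul_div_left _ _ hp,
      Nat.div_eq_of_lt ha, zero_add]
    exact ⟨rfl, rfl⟩
  rw [← card_product]
  refine card_nbij' (fun j => (j % p, j / p)) (fun q => q.1 + p * q.2) ?_ ?_ ?_ ?_
  · intro j hj
    simpa only [coe_product, Set.mem_prod, mem_coe, mem_pascalRowSupport,
      cast_choose_eq_mul_mod_div m j, ne_eq, mul_eq_zero, not_or] using hj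
  · rintro ⟨a, b⟩ hab
    obtain ⟨ha, hb⟩ := mem_product.1 hab
    rw [mem_coe, mem_pascalRowSupport, cast_choose_eq_mul_mod_div, (digits b ha).1,
      (digits b ha).2]
    exact mul_ne_zero (mem_pascalRowSupport.1 ha) (mem_pascalRowSupport.1 hb)
  · intro j _
    exact Nat.mod_add_div j p
  · rintro ⟨a, b⟩ hab
    have ha := (mem_product.1 hab).1
    exact Prod.ext (digits b ha).1 (digits b ha).2

end Lucas

theorem card_pascalRowSupport_two (m : ℕ) : ∃ s, #(pascalRowSupport 2 m) = 2 ^ s := by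
  induction m using Nat.strong_induction_on with
  | _ m ih =>
    rcases Nat.eq_zero_or_pos m with rfl | hm
    · exact ⟨0, rfl⟩
    obtain ⟨s, hs⟩ := ih (m / 2) (Nat.div_lt_self hm one_lt_two)
    have hlow : #(pascalRowSupport 2 (m % 2)) = 2 ^ (m % 2) := by
      rcases Nat.mod_two_eq_zero_or_one m with h | h <;> rw [h] <;> rfl
    exact ⟨m % 2 + s, by rw [card_pascalRowSupport_eq_mul, hlow, hs, pow_add]⟩

theorem support_psi_iterate_wk (k m : ℕ) :
    {n : ℕ | psi^[m] (wk k) n ≠ 0} = (· + k) '' (pascalRowSupport 2 m : Set ℕ) := by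
  ext n
  simp only [Set.mem_ofPred_eq, Set.mem_image, mem_coe, mem_pascalRowSupport]
  constructor
  · intro h
    have hk : k ≤ n := by
      by_contra hn
      exact h (psi_iterate_wk_of_lt m (not_le.1 hn))
    refine ⟨n - k, ?_, Nat.sub_add_cancel hk⟩
    rwa [← psi_iterate_wk_add, Nat.sub_add_cancel hk]
  · rintro ⟨j, hj, rfl⟩
    rwa [psi_iterate_wk_add]

theorem support_card_pow_two (k m : ℕ) :
    {n : ℕ | psi^[m] (wk k) n ≠ 0}.Finite ∧
      ∃ s : ℕ, Nat.card {n : ℕ | psi^[m] (wk k) n ≠ 0} = 2 ^ s := by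
  rw [support_psi_iterate_wk]
  refine ⟨(pascalRowSupport 2 m).finite_toSet.image _, ?_⟩
  obtain ⟨s, hs⟩ := card_pascalRowSupport_two m
  refine ⟨s, ?_⟩
  rw [Nat.card_image_of_injective (add_left_injective k), Nat.card_coe_set_eq,
    Set.ncard_coe_finset, hs]
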